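/- arXiv:math/0203018 — 2 statements merged into one kernel-verified Lean document; each statement's English description precedes it below -/
import Mathlib

section
/- The bilinear form α(φ⊗Uⁿ, ψ⊗Uᵐ) = n·δ_{n+m,0}·∫_X φ·(Uⁿψ) dμ is a Lie algebra 2-cocycle on Lie A(X,T): it is antisymmetric and satisfies α([x,y],z) + α([y,z],x) + α([z,x],y) = 0 for all x,y,z. -/
noncomputable section
open MeasureTheory

variable {X : Type*} [TopologicalSpace X] [MeasurableSpace X]

/-- `n`-th iterate of a homeomorphism, `n : ℕ`. -/
def iterH (T : X ≃ₜ X) : ℕ → X ≃ₜ X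
  | 0 => Homeomorph.refl X
  | n + 1 => (iterH T n).trans T

/-- `n`-th power of a homeomorphism, `n : ℤ` (so `zpowH T n = Tⁿ`). -/
def zpowH (T : X ≃ₜ X) : ℤ → X ≃ₜ X
  | Int.ofNat n => iterH T n
  | Int.negSucc n => (iterH T (n + 1)).symm

/-- The operator `Uⁿ` on continuous functions: `(Uⁿψ)(x) = ψ(Tⁿ x)`. -/
def Un (T : X ≃ₜ X) (n : ℤ) (ψ : C(X, ℂ)) : C(X, ℂ) := ψ.comp (zpowH T n)

/-- The crossed product multiplication on `A(X,T) = ⊕ₙ C(X) ⊗ Uⁿ`,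
`(φ⊗Uⁿ)·(ψ⊗Uᵐ) = (φ·Uⁿψ)⊗U^(n+m)`; the element `φ⊗Uⁿ` is `Finsupp.single n φ`. -/
def amul (T : X ≃ₜ X) (a b : ℤ →₀ C(X, ℂ)) : ℤ →₀ C(X, ℂ) :=
  a.sum fun n φ => b.sum fun m ψ => Finsupp.single (n + m) (φ * Un T n ψ)
/-- The Lie bracket `[a,b] = ab - ba` on `A(X,T)`. -/
def abr (T : X ≃ₜ X) (a b : ℤ →₀ C(X, ℂ)) : ℤ →₀ C(X, ℂ) := amul T a b - amul T b a
/-- The 2-cocycle `α(φ⊗Uⁿ, ψ⊗Uᵐ) = n·δ_{n+m,0}·∫ φ·Uⁿψ dμ`, extended bilinearly. -/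
def acoc (T : X ≃ₜ X) (μ : Measure X) (a b : ℤ →₀ C(X, ℂ)) : ℂ :=
  a.sum fun n φ => b.sum fun m ψ =>
    if n + m = 0 then (n : ℂ) * ∫ x, (φ * Un T n ψ) x ∂μ else 0

/-!
Write `α(x, y) = τ(D x · y)`, where `τ(a) = ∫ a₀ dμ` integrates the degree-zero coefficient and
`D(φ ⊗ Uⁿ) = n φ ⊗ Uⁿ` is the degree derivation of the crossed product. Invariance of `μ` makes
`τ` a trace, `τ(ab) = τ(ba)`, and `τ ∘ D = 0` since `D` kills degree zero. For any trace and
derivation with `τ ∘ D = 0` on an associative ring, `τ(D x · y)` is a 2-cocycle of the commutator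
bracket: antisymmetry is `τ(D(xy)) = 0`, and after cyclic rotations under `τ` the cocycle sum is
twice `τ(D(xyz)) - τ(D(xzy)) = 0`.
-/

theorem trace_deriv_mul_antisymm {A M : Type*} [NonUnitalRing A] [AddCommGroup M]
    (τ : A →+ M) (D : A →+ A) (hτ : ∀ a b, τ (a * b) = τ (b * a))
    (hD : ∀ a b, D (a * b) = D a * b + a * D b) (hτD : ∀ a, τ (D a) = 0) (a b : A) :
    τ (D a * b) = -τ (D b * a) := by
  rw [eq_neg_iff_add_eq_zero, hτ (D b), ← map_add, ← hD, hτD]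

theorem trace_deriv_mul_cocycle {A M : Type*} [NonUnitalRing A] [AddCommGroup M]
    (τ : A →+ M) (D : A →+ A) (hτ : ∀ a b, τ (a * b) = τ (b * a))
    (hD : ∀ a b, D (a * b) = D a * b + a * D b) (hτD : ∀ a, τ (D a) = 0) (a b c : A) :
    τ (D (a * b - b * a) * c) + τ (D (b * c - c * b) * a) + τ (D (c * a - a * c) * b) = 0 := by
  have rotate : ∀ a b c, τ (a * b * c) = τ (b * c * a) := fun a b c => by rw [mul_assoc, hτ]
  have cyclic_sum : ∀ a b c, τ (D a * b * c) + τ (D b * c * a) + τ (D c * a * b) = 0 :=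
    fun a b c => by
      rw [← rotate a, rotate (D c), ← hτD (a * b * c), hD, hD, add_mul, map_add, map_add]
  have expand : ∀ a b c, τ (D (a * b - b * a) * c)
      = τ (D a * b * c) + τ (D b * c * a) - τ (D b * a * c) - τ (D a * c * b) := fun a b c => by
    rw [map_sub, hD, hD, sub_mul, add_mul, add_mul, map_sub, map_add, map_add, rotate a, rotate b]
    abel
  rw [expand, expand, expand]
  linear_combination (norm := module) 2 • cyclic_sum a b c - 2 • cyclic_sum a c b

section
omit [MeasurableSpace X]
variable (T : X ≃ₜ X)

lemma iterH_eq_pow (n : ℕ) : iterH T n = T ^ n := by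
  induction n with
  | zero => rfl
  | succ n ih => rw [pow_succ', ← ih]; rfl

lemma zpowH_eq_zpow (n : ℤ) : zpowH T n = T ^ n := by
  cases n with
  | ofNat n => exact iterH_eq_pow T n
  | negSucc n => rw [zpow_negSucc, ← iterH_eq_pow]; rfl

lemma Un_apply (n : ℤ) (ψ : C(X, ℂ)) (x : X) : Un T n ψ x = ψ ((T ^ n) x) := by
  show ψ (zpowH T n x) = _
  rw [zpowH_eq_zpow]

lemma Un_zero (ψ : C(X, ℂ)) : Un T 0 ψ = ψ := rfl

lemma Un_Un (m n : ℤ) (ψ : C(X, ℂ)) : Un T m (Un T n ψ) = Un T (m + n) ψ := by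
  ext x
  simp only [Un_apply, add_comm m, zpow_add, Homeomorph.mul_apply]

lemma Un_mul (n : ℤ) (φ ψ : C(X, ℂ)) : Un T n (φ * ψ) = Un T n φ * Un T n ψ := rfl

lemma Un_add (n : ℤ) (φ ψ : C(X, ℂ)) : Un T n (φ + ψ) = Un T n φ + Un T n ψ := rfl

lemma Un_zsmul (n k : ℤ) (ψ : C(X, ℂ)) : Un T n (k • ψ) = k • Un T n ψ := rfl

@[simp] lemma Un_zero_right (n : ℤ) : Un T n 0 = 0 := rfl

lemma amul_add_left (a a' b : ℤ →₀ C(X, ℂ)) :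
    amul T (a + a') b = amul T a b + amul T a' b := by
  simp [-Finsupp.single_mul, amul, Finsupp.sum_add_index', add_mul, Finsupp.sum_add]

lemma amul_add_right (a b b' : ℤ →₀ C(X, ℂ)) :
    amul T a (b + b') = amul T a b + amul T a b' := by
  simp [-Finsupp.single_mul, amul, Finsupp.sum_add_index', Un_add, mul_add, Finsupp.sum_add]

lemma amul_zero_left (b : ℤ →₀ C(X, ℂ)) : amul T 0 b = 0 := by
  simp [amul]

lemma amul_zero_right (a : ℤ →₀ C(X, ℂ)) : amul T a 0 = 0 := by
  simp [amul]

lemma amul_assoc (a b c : ℤ →₀ C(X, ℂ)) : amul T (amul T a b) c = amul T a (amul T b c) := by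
  simp [-Finsupp.single_mul, amul, Finsupp.sum_sum_index, mul_add, add_mul, Un_add, Un_mul,
    Un_Un, add_assoc, mul_assoc]

/-- A type synonym, since `ℤ →₀ C(X, ℂ)` already carries the pointwise multiplication. -/
def CrossedProduct (_ : X ≃ₜ X) : Type _ := ℤ →₀ C(X, ℂ)

namespace CrossedProduct

instance : AddCommGroup (CrossedProduct T) := inferInstanceAs (AddCommGroup (ℤ →₀ C(X, ℂ)))

instance : NonUnitalRing (CrossedProduct T) where
  mul := amul T
  left_distrib := amul_add_right T
  right_distrib := amul_add_left T
  zero_mul := amul_zero_left T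
  mul_zero := amul_zero_right T
  mul_assoc := amul_assoc T

def single (n : ℤ) (φ : C(X, ℂ)) : CrossedProduct T := Finsupp.single n φ

lemma single_mul_single (n m : ℤ) (φ ψ : C(X, ℂ)) :
    single T n φ * single T m ψ = single T (n + m) (φ * Un T n ψ) := by
  show amul T (.single n φ) (.single m ψ) = _
  simp [-Finsupp.single_mul, amul, single]

lemma single_add (n : ℤ) (φ ψ : C(X, ℂ)) : single T n (φ + ψ) = single T n φ + single T n ψ :=
  Finsupp.single_add n φ ψ

lemma induction_linear {motive : CrossedProduct T → Prop} (a : CrossedProduct T)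
    (zero : motive 0) (add : ∀ a b, motive a → motive b → motive (a + b))
    (single : ∀ n φ, motive (single T n φ)) : motive a :=
  Finsupp.induction_linear (motive := motive) a zero add single

def degreeDeriv : CrossedProduct T →+ CrossedProduct T :=
  Finsupp.liftAddHom (α := ℤ) (M := C(X, ℂ)) (N := ℤ →₀ C(X, ℂ)) fun n =>
    (Finsupp.singleAddHom n).comp (n • .id _)

lemma degreeDeriv_single (n : ℤ) (φ : C(X, ℂ)) :
    degreeDeriv T (single T n φ) = single T n (n • φ) :=
  Finsupp.liftAddHom_apply_single _ _ _

lemma degreeDeriv_mul (a b : CrossedProduct T) :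
    degreeDeriv T (a * b) = degreeDeriv T a * b + a * degreeDeriv T b := by
  induction a using induction_linear with
  | zero => simp
  | add a a' ha ha' => simp only [add_mul, map_add, ha, ha']; abel
  | single n φ =>
    induction b using induction_linear with
    | zero => simp
    | add b b' hb hb' => simp only [mul_add, map_add, hb, hb']; abel
    | single m ψ =>
      simp only [single_mul_single, degreeDeriv_single, ← single_add, Un_zsmul, smul_mul_assoc,
        mul_smul_comm, add_zsmul]

end CrossedProduct

end

theorem ContinuousMap.integrable {E : Type*} [NormedAddCommGroup E] [CompactSpace X]
    [OpensMeasurableSpace X] (f : C(X, E)) (μ : Measure X) [IsFiniteMeasure μ] :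
    Integrable f μ :=
  f.continuous.integrable_of_hasCompactSupport (.of_compactSpace f)

section
variable (T : X ≃ₜ X) (μ : Measure X)

lemma integral_Un (hinv : ∀ f : C(X, ℂ), ∫ x, f (T x) ∂μ = ∫ x, f x ∂μ) (n : ℤ)
    (f : C(X, ℂ)) : ∫ x, Un T n f x ∂μ = ∫ x, f x ∂μ := by
  induction n using Int.induction_on with
  | zero => rw [Un_zero]
  | succ n ih =>
    rw [← ih, ← hinv (Un T n f)]
    simp only [Un_apply, zpow_add_one, Homeomorph.mul_apply]
  | pred n ih =>
    rw [← ih, ← hinv (Un T (-n - 1) f)]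
    simp only [Un_apply, ← Homeomorph.mul_apply, ← zpow_add_one, sub_add_cancel]

lemma integral_mul_Un_comm (hinv : ∀ f : C(X, ℂ), ∫ x, f (T x) ∂μ = ∫ x, f x ∂μ) {n m : ℤ}
    (h : n + m = 0) (φ ψ : C(X, ℂ)) :
    ∫ x, (ψ * Un T m φ) x ∂μ = ∫ x, (φ * Un T n ψ) x ∂μ := by
  rw [← integral_Un T μ hinv n, Un_mul, Un_Un, h, Un_zero, mul_comm]

lemma acoc_zero_left (b : ℤ →₀ C(X, ℂ)) : acoc T μ 0 b = 0 :=
  Finsupp.sum_zero_index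

lemma acoc_zero_right (a : ℤ →₀ C(X, ℂ)) : acoc T μ a 0 = 0 := by
  simp [acoc]

lemma acoc_single_single (n m : ℤ) (φ ψ : C(X, ℂ)) :
    acoc T μ (CrossedProduct.single T n φ) (CrossedProduct.single T m ψ) =
      if n + m = 0 then (n : ℂ) * ∫ x, (φ * Un T n ψ) x ∂μ else 0 := by
  simp [acoc, CrossedProduct.single]

variable [CompactSpace X] [OpensMeasurableSpace X] [IsFiniteMeasure μ]

def integralAddHom : C(X, ℂ) →+ ℂ where
  toFun f := ∫ x, f x ∂μ
  map_zero' := integral_zero X ℂ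
  map_add' f g := integral_add (f.integrable μ) (g.integrable μ)

lemma acoc_add_left (a a' b : ℤ →₀ C(X, ℂ)) :
    acoc T μ (a + a') b = acoc T μ a b + acoc T μ a' b := by
  refine Finsupp.sum_add_index' (fun n => by simp) fun n φ φ' => ?_
  rw [← Finsupp.sum_add]
  refine Finsupp.sum_congr fun m _ => ?_
  split_ifs
  · rw [← mul_add, add_mul]
    exact congrArg _ (map_add (integralAddHom μ) _ _)
  · rw [add_zero]

lemma acoc_add_right (a b b' : ℤ →₀ C(X, ℂ)) :
    acoc T μ a (b + b') = acoc T μ a b + acoc T μ a b' := by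
  unfold acoc
  rw [← Finsupp.sum_add]
  refine Finsupp.sum_congr fun n _ =>
    Finsupp.sum_add_index' (fun m => by simp) fun m ψ ψ' => ?_
  split_ifs
  · rw [← mul_add, Un_add, mul_add]
    exact congrArg _ (map_add (integralAddHom μ) _ _)
  · rw [add_zero]

namespace CrossedProduct

def trace : CrossedProduct T →+ ℂ :=
  (integralAddHom μ).comp (Finsupp.applyAddHom 0)

lemma trace_single (n : ℤ) (φ : C(X, ℂ)) :
    trace T μ (single T n φ) = if n = 0 then ∫ x, φ x ∂μ else 0 := by
  show ∫ x, Finsupp.single n φ 0 x ∂μ = _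
  by_cases h : n = 0
  · simp [h]
  · simp [h, Ne.symm h]

lemma trace_mul_comm (hinv : ∀ f : C(X, ℂ), ∫ x, f (T x) ∂μ = ∫ x, f x ∂μ)
    (a b : CrossedProduct T) : trace T μ (a * b) = trace T μ (b * a) := by
  induction a using induction_linear with
  | zero => simp
  | add a a' ha ha' => simp only [add_mul, mul_add, map_add, ha, ha']
  | single n φ =>
    induction b using induction_linear with
    | zero => simp
    | add b b' hb hb' => simp only [add_mul, mul_add, map_add, hb, hb']
    | single m ψ =>
      rw [single_mul_single, single_mul_single, trace_single, trace_single, add_comm m]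
      split_ifs with h
      · exact (integral_mul_Un_comm T μ hinv h φ ψ).symm
      · rfl

lemma trace_degreeDeriv (a : CrossedProduct T) : trace T μ (degreeDeriv T a) = 0 := by
  induction a using induction_linear with
  | zero => simp
  | add a a' ha ha' => simp only [map_add, ha, ha', add_zero]
  | single n φ =>
    rw [degreeDeriv_single, trace_single]
    split_ifs with h
    · simp [h]
    · rfl

lemma acoc_eq_trace_degreeDeriv_mul (a b : CrossedProduct T) :
    acoc T μ a b = trace T μ (degreeDeriv T a * b) := by
  induction a using induction_linear with
  | zero => rw [map_zero, zero_mul, map_zero]; exact acoc_zero_left T μ b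
  | add a a' ha ha' =>
    rw [map_add, add_mul, map_add, ← ha, ← ha']
    exact acoc_add_left T μ a a' b
  | single n φ =>
    induction b using induction_linear with
    | zero => rw [mul_zero, map_zero]; exact acoc_zero_right T μ _
    | add b b' hb hb' =>
      rw [mul_add, map_add, ← hb, ← hb']
      exact acoc_add_right T μ _ b b'
    | single m ψ =>
      rw [acoc_single_single, degreeDeriv_single, single_mul_single, trace_single]
      simp [← Int.cast_smul_eq_zsmul ℂ, integral_const_mul]

end CrossedProduct

end

open CrossedProduct in
theorem acoc_is_two_cocycle_general [CompactSpace X] [BorelSpace X] (T : X ≃ₜ X)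
    (μ : Measure X) [IsProbabilityMeasure μ]
    (hinv : ∀ f : C(X, ℂ), ∫ x, f (T x) ∂μ = ∫ x, f x ∂μ) :
    (∀ a b : ℤ →₀ C(X, ℂ), acoc T μ a b = -acoc T μ b a) ∧
    (∀ a b c : ℤ →₀ C(X, ℂ),
      acoc T μ (abr T a b) c + acoc T μ (abr T b c) a + acoc T μ (abr T c a) b = 0) := by
  have hτ := trace_mul_comm T μ hinv
  have hD := degreeDeriv_mul T
  have hτD := trace_degreeDeriv T μ
  refine ⟨fun a b => ?_, fun a b c => ?_⟩
  · rw [acoc_eq_trace_degreeDeriv_mul T μ a b, acoc_eq_trace_degreeDeriv_mul T μ b a]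
    exact trace_deriv_mul_antisymm _ _ hτ hD hτD a b
  · rw [acoc_eq_trace_degreeDeriv_mul T μ (abr T a b) c,
      acoc_eq_trace_degreeDeriv_mul T μ (abr T b c) a,
      acoc_eq_trace_degreeDeriv_mul T μ (abr T c a) b]
    exact trace_deriv_mul_cocycle _ _ hτ hD hτD a b c

/-- `α` is an antisymmetric 2-cocycle on `Lie A(X,T)`. -/
theorem acoc_is_two_cocycle [CompactSpace X] [T2Space X] [BorelSpace X] (T : X ≃ₜ X)
    (μ : Measure X) [IsProbabilityMeasure μ]
    (hinv : ∀ f : C(X, ℂ), ∫ x, f (T x) ∂μ = ∫ x, f x ∂μ) :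
    (∀ a b : ℤ →₀ C(X, ℂ), acoc T μ a b = -acoc T μ b a) ∧
    (∀ a b c : ℤ →₀ C(X, ℂ),
      acoc T μ (abr T a b) c + acoc T μ (abr T b c) a + acoc T μ (abr T c a) b = 0) :=
  acoc_is_two_cocycle_general T μ hinv
end
end

section
/- The cocycle α(φ⊗Uⁿ, ψ⊗Uᵐ) = n·δ_{n+m,0}·∫φ·Uⁿψ dμ is not a coboundary: there is no linear functional f on the Lie algebra with α(x,y) = f([x,y]) for all x,y. -/
noncomputable section
open MeasureTheory

variable {X : Type*} [TopologicalSpace X] [MeasurableSpace X]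

/-- the cocycle `α` is not a coboundary: there is no linear functional `f`
with `α(x,y) = f([x,y])` for all `x, y`. -/
theorem acoc_not_coboundary [CompactSpace X] [T2Space X] [BorelSpace X] (T : X ≃ₜ X)
    (μ : Measure X) [IsProbabilityMeasure μ]
    (hinv : ∀ f : C(X, ℂ), ∫ x, f (T x) ∂μ = ∫ x, f x ∂μ) :
    ¬∃ f : (ℤ →₀ C(X, ℂ)) →ₗ[ℂ] ℂ,
        ∀ x y : ℤ →₀ C(X, ℂ), acoc T μ x y = f (abr T x y) := by
  rintro ⟨f, hf⟩
  have hUn : ∀ n : ℤ, Un T n (1 : C(X, ℂ)) = 1 := fun n => rfl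
  have hUn0 : ∀ n : ℤ, Un T n (0 : C(X, ℂ)) = 0 := fun n => rfl
  have hsum : ∀ (n m : ℤ) (g : ℤ → C(X, ℂ) → (ℤ →₀ C(X, ℂ))),
      (∀ k, g k 0 = 0) → True := fun _ _ _ _ => trivial
  have hamul : ∀ (n m : ℤ), amul T (Finsupp.single n 1) (Finsupp.single m 1)
      = Finsupp.single (n + m) 1 := by
    intro n m
    rw [amul, Finsupp.sum_single_index, Finsupp.sum_single_index]
    · rw [hUn, mul_one]
    · rw [hUn0, mul_zero, Finsupp.single_zero]
    · rw [Finsupp.sum_single_index]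
      · rw [zero_mul, Finsupp.single_zero]
      · rw [hUn0, zero_mul, Finsupp.single_zero]
  have habr : abr T (Finsupp.single 1 1) (Finsupp.single (-1) (1 : C(X, ℂ))) = 0 := by
    rw [abr, hamul, hamul]
    norm_num
  have hacoc : acoc T μ (Finsupp.single 1 1) (Finsupp.single (-1) (1 : C(X, ℂ))) = 1 := by
    rw [acoc, Finsupp.sum_single_index, Finsupp.sum_single_index]
    · simp [hUn]
    · simp [hUn0]
    · rw [Finsupp.sum_single_index] <;> simp [hUn, hUn0]
  have key := hf (Finsupp.single 1 1) (Finsupp.single (-1) 1)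
  rw [habr, hacoc, map_zero] at key
  exact one_ne_zero key
end
end
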